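/- arXiv:2406.16588 — 6 statements merged into one kernel-verified Lean document; each statement's English description precedes it below -/
import Mathlib

section
/- Assume global existence and uniqueness of mode trajectories and that Q has at least two elements. Then for every mode q : Q, every i ≥ 1, every x₀ : E, and every τ ≥ 0: (x₀, τ) ∈ X q i if and only if there exist a mode q' : Q with q' ≠ q, a mode-q trajectory x from (x₀, τ), and a time τ' ≥ τ such that (x τ', τ') ∈ X q' (i-1) and φ₁ (x τ'') τ'' for all τ'' ∈ Set.Icc τ τ'. (Paper's Theorem 1, part 2: inductive characterization of the state-time sets.) -/
open Set

noncomputable section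

/-- The state space: `EuclideanSpace ℝ (Fin n)`. -/
abbrev E (n : ℕ) := EuclideanSpace ℝ (Fin n)

/-- A controller from time `τ` with at most `i` switches: a finite sequence
`(q₀,t₀),…,(q_k,t_k)` with `k ≤ i`, `t 0 = τ` and nondecreasing switching times. -/
structure Controller (Q : Type) (τ : ℝ) (i : ℕ) where
  k : ℕ
  hk : k ≤ i
  q : ℕ → Q
  t : ℕ → ℝ
  ht0 : t 0 = τ
  mono : ∀ j, j < k → t j ≤ t (j + 1)

/-- `Sat x τ`: the signal `x` satisfies `φ₁ U_{I ⊖ τ} φ₂` from time `τ`. -/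
def Sat {n : ℕ} (φ₁ φ₂ : E n → ℝ → Prop) (l u : ℝ) (x : ℝ → E n) (τ : ℝ) : Prop :=
  ∃ τ', τ ≤ τ' ∧ τ' - τ ∈ Set.Icc (l - τ) (u - τ) ∩ Set.Ici (0 : ℝ) ∧
    φ₂ (x τ') τ' ∧ ∀ τ'' ∈ Set.Icc τ τ', φ₁ (x τ'') τ''

/-- `x` is a trajectory under the controller `c` from `(x₀, τ)`. -/
def IsTraj {n : ℕ} {Q : Type} (f : Q → E n → E n) {τ : ℝ} {i : ℕ}
    (c : Controller Q τ i) (x₀ : E n) (x : ℝ → E n) : Prop :=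
  ContinuousOn x (Set.Ici τ) ∧ x τ = x₀ ∧
    ∀ j ≤ c.k, ∀ s : ℝ, c.t j ≤ s → (j < c.k → s < c.t (j + 1)) →
      HasDerivWithinAt x (f (c.q j) (x s)) (Set.Ici s) s

/-- The state-time set `X q i`. -/
def X {n : ℕ} {Q : Type} (φ₁ φ₂ : E n → ℝ → Prop) (l u : ℝ) (f : Q → E n → E n)
    (q : Q) (i : ℕ) : Set (E n × ℝ) :=
  {p | 0 ≤ p.2 ∧ ∃ c : Controller Q p.2 i, c.q 0 = q ∧
    ∃ x : ℝ → E n, IsTraj f c p.1 x ∧ Sat φ₁ φ₂ l u x p.2}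

/-- A mode-`q` trajectory from `(x₀, τ)` (trajectory under the single-element
controller `(q, τ)`). -/
def IsModeTraj {n : ℕ} {Q : Type} (f : Q → E n → E n) (q : Q) (x₀ : E n) (τ : ℝ)
    (x : ℝ → E n) : Prop :=
  ContinuousOn x (Set.Ici τ) ∧ x τ = x₀ ∧
    ∀ s : ℝ, τ ≤ s → HasDerivWithinAt x (f q (x s)) (Set.Ici s) s

/-- `Ψ` is a global flow for mode `q`. -/
def IsGlobalFlow {n : ℕ} {Q : Type} (f : Q → E n → E n) (q : Q)
    (Ψ : E n → ℝ → ℝ → E n) : Prop :=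
  (∀ x₀ τ, Ψ x₀ τ τ = x₀) ∧
  (∀ (x₀ : E n) (τ t : ℝ), HasDerivAt (fun s => Ψ x₀ τ s) (f q (Ψ x₀ τ t)) t) ∧
  (∀ (x₀ : E n) (τ : ℝ) (x : ℝ → E n),
      IsModeTraj f q x₀ τ x → Set.EqOn x (Ψ x₀ τ) (Set.Ici τ))

/-- Relaxing the switching bound of a controller. -/
def Controller.relax {Q : Type} {τ : ℝ} {i j : ℕ} (h : i ≤ j)
    (c : Controller Q τ i) : Controller Q τ j :=
  ⟨c.k, c.hk.trans h, c.q, c.t, c.ht0, c.mono⟩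

/-- Prepend the pair `(q, τ)` to a controller from time `τ' ≥ τ`. -/
def Controller.prepend {Q : Type} {τ' : ℝ} {i : ℕ} (q : Q) (τ : ℝ) (h : τ ≤ τ')
    (c : Controller Q τ' i) : Controller Q τ (i + 1) where
  k := c.k + 1
  hk := Nat.succ_le_succ c.hk
  q := fun j => match j with | 0 => q | Nat.succ m => c.q m
  t := fun j => match j with | 0 => τ | Nat.succ m => c.t m
  ht0 := rfl
  mono := by
    intro j hj
    cases j with
    | zero => show τ ≤ c.t 0; rw [c.ht0]; exact h
    | succ m =>
        show c.t m ≤ c.t (m + 1)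
        exact c.mono m (Nat.lt_of_succ_lt_succ hj)

namespace Glue

variable {n : ℕ}

lemma eq_left {x w : ℝ → E n} {t₁ : ℝ} (hw : w t₁ = x t₁) {s : ℝ} (hs : s ≤ t₁) :
    (if s < t₁ then x s else w s) = x s := by
  by_cases h : s < t₁
  · simp [h]
  · have : s = t₁ := le_antisymm hs (not_lt.mp h)
    simp [h, this, hw]

lemma eq_right {x w : ℝ → E n} {t₁ s : ℝ} (hs : t₁ ≤ s) :
    (if s < t₁ then x s else w s) = w s := by
  simp [not_lt.mpr hs]

lemma contOn {x w : ℝ → E n} {τ t₁ : ℝ}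
    (hx : ContinuousOn x (Icc τ t₁)) (hw : ContinuousOn w (Ici t₁)) (hxw : w t₁ = x t₁) :
    ContinuousOn (fun s => if s < t₁ then x s else w s) (Ici τ) := by
  set z := fun s => if s < t₁ then x s else w s with hz
  have h1 : ContinuousOn z (Icc τ t₁) := hx.congr (fun s hs => eq_left hxw hs.2)
  have h2 : ContinuousOn z (Ici t₁) := hw.congr (fun s hs => eq_right hs)
  intro s hs
  have hsub : Ici τ ⊆ Icc τ t₁ ∪ Ici t₁ := by
    intro r hr
    rcases le_total r t₁ with h | h
    · exact Or.inl ⟨hr, h⟩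
    · exact Or.inr h
  refine (ContinuousWithinAt.union ?_ ?_).mono hsub
  · by_cases h : s ∈ Icc τ t₁
    · exact h1 s h
    · exact continuousWithinAt_of_notMem_closure (by rwa [isClosed_Icc.closure_eq])
  · by_cases h : s ∈ Ici t₁
    · exact h2 s h
    · exact continuousWithinAt_of_notMem_closure (by rwa [isClosed_Ici.closure_eq])

lemma deriv_left {x w : ℝ → E n} {t₁ s : ℝ} (hs : s < t₁) {d : E n}
    (hd : HasDerivWithinAt x d (Ici s) s) :
    HasDerivWithinAt (fun r => if r < t₁ then x r else w r) d (Ici s) s := by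
  refine hd.congr_of_eventuallyEq ?_ (by simp [hs])
  have ht : Iio t₁ ∈ nhdsWithin s (Ici s) := mem_nhdsWithin_of_mem_nhds (Iio_mem_nhds hs)
  filter_upwards [ht] with r hr
  simp [Set.mem_Iio.mp hr]

lemma deriv_right {x w : ℝ → E n} {t₁ s : ℝ} (hs : t₁ ≤ s) {d : E n}
    (hd : HasDerivWithinAt w d (Ici s) s) :
    HasDerivWithinAt (fun r => if r < t₁ then x r else w r) d (Ici s) s :=
  hd.congr (fun r hr => eq_right (hs.trans hr)) (eq_right hs)

end Glue

/-- Membership in `X q' i` witnessed "on the spot": the time itself is in `[l,u]`,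
`φ₁` and `φ₂` hold there, and a mode-`q'` trajectory exists. -/
lemma mem_X_single {n : ℕ} {Q : Type} (φ₁ φ₂ : E n → ℝ → Prop) (l u : ℝ)
    (f : Q → E n → E n) (q' : Q) (i : ℕ) (y : E n) (σ : ℝ)
    (h0 : 0 ≤ σ) (hl : l ≤ σ) (hu : σ ≤ u) (hφ2 : φ₂ y σ) (hφ1 : φ₁ y σ)
    (w : ℝ → E n) (hw : IsModeTraj f q' y σ w) :
    (y, σ) ∈ X φ₁ φ₂ l u f q' i := by
  refine ⟨h0, ⟨0, Nat.zero_le _, fun _ => q', fun _ => σ, rfl, fun j hj => le_rfl⟩, rfl,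
    w, ⟨hw.1, hw.2.1, ?_⟩, σ, le_rfl, ⟨⟨by linarith, by linarith⟩, by simp⟩,
    by rw [hw.2.1]; exact hφ2, ?_⟩
  · intro j hj s hs _
    exact hw.2.2 s hs
  · intro τ'' hτ''
    have : τ'' = σ := le_antisymm hτ''.2 hτ''.1
    rw [this, hw.2.1]
    exact hφ1

/-- Extend a function with mode-`q` dynamics on `[τ, t₁)` to a global mode-`q`
trajectory agreeing with it on `[τ, t₁]`. -/
lemma extend_mode {n : ℕ} {Q : Type} (f : Q → E n → E n) (q : Q) (x₀ : E n)
    (τ t₁ : ℝ) (hτt : τ ≤ t₁) (x : ℝ → E n) (hcont : ContinuousOn x (Ici τ))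
    (hx0 : x τ = x₀)
    (hderiv : ∀ s, τ ≤ s → s < t₁ → HasDerivWithinAt x (f q (x s)) (Ici s) s)
    (w : ℝ → E n) (hw : IsModeTraj f q (x t₁) t₁ w) :
    ∃ z : ℝ → E n, IsModeTraj f q x₀ τ z ∧ EqOn z x (Icc τ t₁) := by
  obtain ⟨hwc, hwt, hwd⟩ := hw
  refine ⟨fun s => if s < t₁ then x s else w s, ⟨?_, ?_, ?_⟩,
    fun s hs => Glue.eq_left hwt hs.2⟩
  · exact Glue.contOn (hcont.mono Icc_subset_Ici_self) hwc hwt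
  · show (if τ < t₁ then x τ else w τ) = x₀
    rw [Glue.eq_left hwt hτt, hx0]
  · intro s hs
    rcases lt_or_ge s t₁ with h | h
    · have hzs : (if s < t₁ then x s else w s) = x s := Glue.eq_left hwt h.le
      simp only [hzs]
      exact Glue.deriv_left h (hderiv s hs h)
    · have hzs : (if s < t₁ then x s else w s) = w s := Glue.eq_right h
      simp only [hzs]
      exact Glue.deriv_right h (hwd s h)

/-- Paper's Theorem 1, part 2: inductive characterization of the state-time sets,
assuming global existence and uniqueness of mode trajectories. -/
theorem stmt5 {n : ℕ} (φ₁ φ₂ : E n → ℝ → Prop) (l u : ℝ) (hl : 0 ≤ l) (hlu : l ≤ u)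
    (Q : Type) [Fintype Q] [Nontrivial Q] (f : Q → E n → E n)
    (hex : ∀ (q : Q) (y : E n) (s : ℝ), 0 ≤ s → ∃ x : ℝ → E n, IsModeTraj f q y s x)
    (huniq : ∀ (q : Q) (y : E n) (s : ℝ) (x₁ x₂ : ℝ → E n),
      IsModeTraj f q y s x₁ → IsModeTraj f q y s x₂ → Set.EqOn x₁ x₂ (Set.Ici s))
    (q : Q) (i : ℕ) (hi : 1 ≤ i) (x₀ : E n) (τ : ℝ) (hτ : 0 ≤ τ) :
    (x₀, τ) ∈ X φ₁ φ₂ l u f q i ↔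
      ∃ q' : Q, q' ≠ q ∧ ∃ x : ℝ → E n, IsModeTraj f q x₀ τ x ∧
        ∃ τ', τ ≤ τ' ∧ (x τ', τ') ∈ X φ₁ φ₂ l u f q' (i - 1) ∧
          ∀ τ'' ∈ Set.Icc τ τ', φ₁ (x τ'') τ'' := by
  constructor
  · -- forward direction
    rintro ⟨hτ0, c, hq0, x, hxtraj, hsat⟩
    clear hτ0
    -- strong induction on c.k
    have main : ∀ k (c : Controller Q τ i), c.k = k → c.q 0 = q →
        ∀ (x₀ : E n) (x : ℝ → E n), IsTraj f c x₀ x → Sat φ₁ φ₂ l u x τ →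
        ∃ q' : Q, q' ≠ q ∧ ∃ z : ℝ → E n, IsModeTraj f q x₀ τ z ∧
          ∃ τ', τ ≤ τ' ∧ (z τ', τ') ∈ X φ₁ φ₂ l u f q' (i - 1) ∧
            ∀ τ'' ∈ Set.Icc τ τ', φ₁ (z τ'') τ'' := by
      intro k
      induction k using Nat.strong_induction_on with
      | _ k ih =>
        intro c hck hq0 x₀ x hxtraj hsat
        obtain ⟨hxc, hxτ, hxd⟩ := hxtraj
        obtain ⟨σ, hτσ, ⟨⟨hσ1, hσ2⟩, hσ3⟩, hφ2, hφ1⟩ := hsat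
        have hlσ : l ≤ σ := by linarith
        have hσu : σ ≤ u := by linarith
        have hσ0 : 0 ≤ σ := le_trans hτ hτσ
        match k, hck with
        | 0, hck =>
          -- no switches: x itself is a mode-q trajectory
          have hmode : IsModeTraj f q x₀ τ x := by
            refine ⟨hxc, hxτ, fun s hs => ?_⟩
            have := hxd 0 (by omega) s (by rw [c.ht0]; exact hs) (by omega)
            rwa [hq0] at this
          obtain ⟨q', hq'⟩ := exists_ne q
          obtain ⟨w, hw⟩ := hex q' (x σ) σ hσ0
          exact ⟨q', hq', x, hmode, σ, hτσ,
            mem_X_single φ₁ φ₂ l u f q' (i-1) (x σ) σ hσ0 hlσ hσu hφ2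
              (hφ1 σ ⟨hτσ, le_rfl⟩) w hw, hφ1⟩
        | (m+1), hck =>
          have hτt₁ : τ ≤ c.t 1 := by
            have := c.mono 0 (by omega)
            rwa [c.ht0] at this
          by_cases hqq : c.q 1 = q
          · -- merge the first two segments and recurse
            have hm : m ≤ i := by have := c.hk; omega
            set c'' : Controller Q τ i :=
              { k := m, hk := hm
                q := fun j => if j = 0 then q else c.q (j+1)
                t := fun j => if j = 0 then τ else c.t (j+1)
                ht0 := by simp
                mono := by
                  intro j hj
                  rcases j with _ | p
                  · simp only [if_pos rfl, if_neg (Nat.succ_ne_zero 0)]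
                    calc τ = c.t 0 := c.ht0.symm
                      _ ≤ c.t 1 := c.mono 0 (by omega)
                      _ ≤ c.t 2 := c.mono 1 (by omega)
                  · simp only [if_neg (Nat.succ_ne_zero p), if_neg (Nat.succ_ne_zero (p+1))]
                    exact c.mono (p+2) (by omega) } with hc''
            have htraj'' : IsTraj f c'' x₀ x := by
              refine ⟨hxc, hxτ, ?_⟩
              intro j hj s hs hs'
              rcases j with _ | p
              · -- first (merged) segment
                simp only [hc'', if_pos rfl] at hs hs' ⊢
                rcases lt_or_ge s (c.t 1) with h | h
                · have := hxd 0 (by omega) s (by rw [c.ht0]; exact hs) (fun _ => h)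
                  rwa [hq0] at this
                · have := hxd 1 (by omega) s h (by
                    intro h1
                    have hm0 : 0 < m := by omega
                    have := hs' hm0
                    simpa using this)
                  rwa [hqq] at this
              · simp only [hc'', if_neg (Nat.succ_ne_zero p)] at hs hs' ⊢
                have hj' : p + 1 ≤ m := hj
                refine hxd (p+2) (by rw [hck]; omega) s hs ?_
                intro h2
                have := hs' (by omega)
                simpa using this
            exact ih m (by omega) c'' rfl (by simp [hc'']) x₀ x htraj''
              ⟨σ, hτσ, ⟨⟨hσ1, hσ2⟩, hσ3⟩, hφ2, hφ1⟩
          · -- genuine first switch at t₁ := c.t 1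
            set t₁ := c.t 1 with ht₁
            have ht₁0 : 0 ≤ t₁ := le_trans hτ hτt₁
            obtain ⟨w, hw⟩ := hex q (x t₁) t₁ ht₁0
            obtain ⟨z, hz, hzx⟩ := extend_mode f q x₀ τ t₁ hτt₁ x hxc hxτ
              (fun s hs hst => by
                have := hxd 0 (by omega) s (by rw [c.ht0]; exact hs) (fun _ => hst)
                rwa [hq0] at this) w hw
            rcases le_total σ t₁ with hcase | hcase
            · -- satisfaction happens before the first switch
              obtain ⟨q', hq'⟩ := exists_ne q
              obtain ⟨w', hw'⟩ := hex q' (x σ) σ hσ0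
              have hzσ : z σ = x σ := hzx ⟨hτσ, hcase⟩
              refine ⟨q', hq', z, hz, σ, hτσ, ?_, ?_⟩
              · rw [hzσ]
                exact mem_X_single φ₁ φ₂ l u f q' (i-1) (x σ) σ hσ0 hlσ hσu hφ2
                  (hφ1 σ ⟨hτσ, le_rfl⟩) w' hw'
              · intro τ'' hτ''
                rw [hzx ⟨hτ''.1, le_trans hτ''.2 hcase⟩]
                exact hφ1 τ'' hτ''
            · -- satisfaction happens after the first switch
              have hzt₁ : z t₁ = x t₁ := hzx ⟨hτt₁, le_rfl⟩
              refine ⟨c.q 1, hqq, z, hz, t₁, hτt₁, ?_, ?_⟩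
              · rw [hzt₁]
                refine ⟨ht₁0, ⟨m, by have h1 := c.hk; rw [hck] at h1; omega,
                  fun j => c.q (j+1), fun j => c.t (j+1), rfl,
                  fun j hj => c.mono (j+1) (by rw [hck]; omega)⟩, rfl,
                  x, ⟨hxc.mono (Ici_subset_Ici.mpr hτt₁), rfl, ?_⟩, ?_⟩
                · intro j hj s hs hs'
                  have hj' : j ≤ m := hj
                  refine hxd (j+1) (by rw [hck]; omega) s hs ?_
                  intro h
                  rw [hck] at h
                  exact hs' (show j < m by omega)
                · exact ⟨σ, hcase, ⟨⟨by linarith, by linarith⟩, by simp [hcase]⟩, hφ2,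
                    fun τ'' hτ'' => hφ1 τ'' ⟨le_trans hτt₁ hτ''.1, hτ''.2⟩⟩
              · intro τ'' hτ''
                rw [hzx hτ'']
                exact hφ1 τ'' ⟨hτ''.1, le_trans hτ''.2 hcase⟩
    exact main c.k c rfl hq0 x₀ x hxtraj hsat
  · -- backward direction
    rintro ⟨q', hq', x, ⟨hxc, hxτ, hxd⟩, τ', hττ', ⟨hτ'0, c', hc'q0, y, ⟨hyc, hyτ', hyd⟩, hysat⟩,
      hφ1x⟩
    have hyc' : ContinuousOn y (Ici τ') := hyc
    have hyτ'2 : y τ' = x τ' := hyτ'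
    refine ⟨hτ, (c'.prepend q τ hττ').relax (by omega), rfl, ?_⟩
    refine ⟨fun s => if s < τ' then x s else y s, ⟨?_, ?_, ?_⟩, ?_⟩
    · exact Glue.contOn (hxc.mono Icc_subset_Ici_self) hyc' hyτ'2
    · show (if τ < τ' then x τ else y τ) = x₀
      rw [Glue.eq_left hyτ'2 hττ', hxτ]
    · intro j hj s hs hs'
      rcases j with _ | p
      · -- first segment: mode q on [τ, τ')
        have hs0 : τ ≤ s := hs
        have hsτ' : s < τ' := by
          have h := hs' (Nat.succ_pos c'.k)
          have h2 : s < c'.t 0 := h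
          have h3 : c'.t 0 = τ' := c'.ht0
          rw [h3] at h2
          exact h2
        show HasDerivWithinAt (fun r => if r < τ' then x r else y r)
          (f q (if s < τ' then x s else y s)) (Ici s) s
        rw [show (if s < τ' then x s else y s) = x s by simp [hsτ']]
        exact Glue.deriv_left hsτ' (hxd s hs0)
      · -- later segments: follow y
        have hj' : p + 1 ≤ c'.k + 1 := hj
        have hpk : p ≤ c'.k := by omega
        have ht0p : c'.t 0 ≤ c'.t p := by
          clear hs hs' hj hj'
          induction p with
          | zero => exact le_rfl
          | succ m ihm => exact le_trans (ihm (by omega)) (c'.mono m (by omega))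
        have hsp : c'.t p ≤ s := hs
        have hτ's : τ' ≤ s := by
          have h3 : c'.t 0 = τ' := c'.ht0
          rw [← h3]
          exact le_trans ht0p hsp
        have hs'' : p < c'.k → s < c'.t (p + 1) := fun h => hs' (Nat.succ_lt_succ h)
        show HasDerivWithinAt (fun r => if r < τ' then x r else y r)
          (f (c'.q p) (if s < τ' then x s else y s)) (Ici s) s
        rw [show (if s < τ' then x s else y s) = y s by simp [not_lt.mpr hτ's]]
        exact Glue.deriv_right hτ's (hyd p hpk s hsp hs'')
    · -- satisfaction
      obtain ⟨σ, hτ'σ, hσmem, hφ2, hφ1y⟩ := hysat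
      have hτ'σ' : τ' ≤ σ := hτ'σ
      have hσ1 : l - τ' ≤ σ - τ' := hσmem.1.1
      have hσ2 : σ - τ' ≤ u - τ' := hσmem.1.2
      refine ⟨σ, le_trans hττ' hτ'σ', ⟨⟨by linarith, by linarith⟩, by
        simp only [Set.mem_Ici]; linarith⟩, ?_, ?_⟩
      · show φ₂ (if σ < τ' then x σ else y σ) σ
        rw [Glue.eq_right hτ'σ']
        exact hφ2
      · intro τ'' hτ''
        show φ₁ (if τ'' < τ' then x τ'' else y τ'') τ''
        rcases lt_or_ge τ'' τ' with h | h
        · rw [show (if τ'' < τ' then x τ'' else y τ'') = x τ'' by simp [h]]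
          exact hφ1x τ'' ⟨hτ''.1, h.le⟩
        · rw [Glue.eq_right h]
          exact hφ1y τ'' ⟨h, hτ''.2⟩
end
end

section
/- Controller concatenation: let q q' : Q, i ≥ 1, x₀ : E, and 0 ≤ τ ≤ τ'. Suppose y is a mode-q trajectory from (x₀, τ) with φ₁ (y s) s for all s ∈ Set.Icc τ τ', and suppose there exist a controller from time τ' with at most i-1 switches whose initial mode is q' and a trajectory z under it from (y τ', τ') with Sat z τ'. Then (x₀, τ) ∈ X q i; concretely, prepending the pair (q, τ) to the given controller yields a controller from time τ with at most i switches and initial mode q, and the function equal to y on [τ, τ'] and to z on [τ', ∞) is a trajectory under it from (x₀, τ) satisfying Sat from time τ. (The concatenation step in the proof of the paper's Theorem 1.) -/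
open Set

noncomputable section

/-- Controller concatenation (the concatenation step in the proof of the paper's
Theorem 1). -/
theorem stmt6 {n : ℕ} (φ₁ φ₂ : E n → ℝ → Prop) (l u : ℝ) (hl : 0 ≤ l) (hlu : l ≤ u)
    (Q : Type) [Fintype Q] (f : Q → E n → E n)
    (q q' : Q) (i : ℕ) (hi : 1 ≤ i) (x₀ : E n) (τ τ' : ℝ)
    (hτ : 0 ≤ τ) (hττ' : τ ≤ τ')
    (y : ℝ → E n) (hy : IsModeTraj f q x₀ τ y)
    (hφ₁ : ∀ s ∈ Set.Icc τ τ', φ₁ (y s) s)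
    (c : Controller Q τ' (i - 1)) (hc : c.q 0 = q')
    (z : ℝ → E n) (hz : IsTraj f c (y τ') z) (hsat : Sat φ₁ φ₂ l u z τ') :
    (x₀, τ) ∈ X φ₁ φ₂ l u f q i ∧
      ((Controller.prepend q τ hττ' c).relax (show i - 1 + 1 ≤ i by omega)).q 0 = q ∧
      IsTraj f ((Controller.prepend q τ hττ' c).relax (show i - 1 + 1 ≤ i by omega))
        x₀ (fun s => if s < τ' then y s else z s) ∧
      Sat φ₁ φ₂ l u (fun s => if s < τ' then y s else z s) τ := by
  set w : ℝ → E n := fun s => if s < τ' then y s else z s with hwdef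
  have hzy : z τ' = y τ' := hz.2.1
  have hwy : ∀ s ∈ Icc τ τ', w s = y s := by
    intro s hs
    by_cases h : s < τ'
    · simp [w, h]
    · have hs' : s = τ' := le_antisymm hs.2 (not_lt.1 h)
      simp [w, hs', hzy]
  have hwz : ∀ s, τ' ≤ s → w s = z s := by
    intro s hs; simp [w, not_lt.2 hs]
  -- continuity
  have hcont : ContinuousOn w (Ici τ) := by
    intro s hs
    rcases lt_trichotomy s τ' with h | h | h
    · refine ((hy.1 s hs).congr_of_eventuallyEq ?_ ?_)
      · filter_upwards [mem_nhdsWithin_of_mem_nhds (Iio_mem_nhds h)] with t ht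
        exact if_pos ht
      · exact if_pos h
    · subst h
      have h1 : ContinuousWithinAt w (Icc τ s) s := by
        refine ((hy.1 s hs).mono Icc_subset_Ici_self).congr hwy
          (hwy s ⟨hττ', le_rfl⟩)
      have h2 : ContinuousWithinAt w (Ici s) s := by
        refine (hz.1 s self_mem_Ici).congr (fun t ht => hwz t ht) (hwz s le_rfl)
      refine (h1.union h2).mono ?_
      intro t ht
      rcases le_or_gt t s with h' | h'
      · exact Or.inl ⟨ht, h'⟩
      · exact Or.inr h'.le
    · have hzc : ContinuousAt z s := (hz.1).continuousAt (Ici_mem_nhds h)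
      have : ContinuousAt w s := by
        refine hzc.congr ?_
        filter_upwards [Ioi_mem_nhds h] with t ht
        exact (hwz t ht.le).symm
      exact this.continuousWithinAt
  have hw0 : w τ = x₀ := by
    rw [hwy τ ⟨le_rfl, hττ'⟩]; exact hy.2.1
  have htmono : ∀ m, m ≤ c.k → τ' ≤ c.t m := by
    intro m
    induction m with
    | zero => intro _; rw [c.ht0]
    | succ p ih =>
        intro hp
        exact (ih (Nat.le_of_succ_le hp)).trans (c.mono p (Nat.lt_of_succ_le hp))
  set C := (Controller.prepend q τ hττ' c).relax (show i - 1 + 1 ≤ i by omega) with hC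
  have hCk : C.k = c.k + 1 := rfl
  have hCt0 : C.t 0 = τ := rfl
  have hCtS : ∀ m, C.t (m + 1) = c.t m := fun _ => rfl
  have hCq0 : C.q 0 = q := rfl
  have hCqS : ∀ m, C.q (m + 1) = c.q m := fun _ => rfl
  have htraj : IsTraj f C x₀ w := by
    refine ⟨hcont, hw0, ?_⟩
    intro j hj s hsj hlt
    cases j with
    | zero =>
        have hsτ' : s < τ' := by
          have := hlt (by rw [hCk]; omega)
          rw [hCtS 0, c.ht0] at this; exact this
        rw [hCt0] at hsj
        have hws : w s = y s := hwy s ⟨hsj, hsτ'.le⟩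
        rw [hCq0, hws]
        refine (hy.2.2 s hsj).congr_of_eventuallyEq ?_ hws
        filter_upwards [mem_nhdsWithin_of_mem_nhds (Iio_mem_nhds hsτ')] with t ht
        exact if_pos ht
    | succ m =>
        rw [hCk] at hj hlt
        have hm : m ≤ c.k := by omega
        rw [hCtS m] at hsj
        have hτ's : τ' ≤ s := (htmono m hm).trans hsj
        have hws : w s = z s := hwz s hτ's
        rw [hCqS m, hws]
        have hlt' : m < c.k → s < c.t (m + 1) := by
          intro h
          have := hlt (by omega)
          rwa [hCtS (m + 1)] at this
        refine (hz.2.2 m hm s hsj hlt').congr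
          (fun t ht => hwz t (hτ's.trans ht)) hws
  have hsatw : Sat φ₁ φ₂ l u w τ := by
    obtain ⟨τ'', h1, ⟨⟨h2, h3⟩, h4⟩, h5, h6⟩ := hsat
    refine ⟨τ'', hττ'.trans h1, ⟨⟨by linarith, by linarith⟩, by
      simp; linarith [mem_Ici.mp h4]⟩, ?_, ?_⟩
    · rw [hwz τ'' h1]; exact h5
    · intro s hs
      by_cases h : s < τ'
      · rw [hwy s ⟨hs.1, h.le⟩]
        exact hφ₁ s ⟨hs.1, h.le⟩
      · rw [hwz s (not_lt.1 h)]
        exact h6 s ⟨not_lt.1 h, hs.2⟩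
  exact ⟨⟨hτ, C, hCq0, w, htraj, hsatw⟩, hCq0, htraj, hsatw⟩
end
end

section
/- Let q : Q and let Ψ be a global flow for mode q. Then for every x₀ : E and every τ ≥ 0: (x₀, τ) ∈ X q 0 if and only if there exists δ ≥ 0 such that τ + δ ∈ Set.Icc l u, φ₂ (Ψ x₀ τ (τ + δ)) (τ + δ), and φ₁ (Ψ x₀ τ (τ + h)) (τ + h) for all h ∈ Set.Icc 0 δ. (Paper's Theorem 2, base equation (3), expressing X_q^0 via the solution map.) -/
open Set

noncomputable section

/-- Paper's Theorem 2, base equation (3): `X q 0` expressed via the solution map. -/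
theorem stmt8 {n : ℕ} (φ₁ φ₂ : E n → ℝ → Prop) (l u : ℝ) (hl : 0 ≤ l) (hlu : l ≤ u)
    (Q : Type) [Fintype Q] (f : Q → E n → E n)
    (q : Q) (Ψ : E n → ℝ → ℝ → E n) (hΨ : IsGlobalFlow f q Ψ)
    (x₀ : E n) (τ : ℝ) (hτ : 0 ≤ τ) :
    (x₀, τ) ∈ X φ₁ φ₂ l u f q 0 ↔
      ∃ δ ≥ (0 : ℝ), (τ + δ) ∈ Set.Icc l u ∧ φ₂ (Ψ x₀ τ (τ + δ)) (τ + δ) ∧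
        ∀ h ∈ Set.Icc (0 : ℝ) δ, φ₁ (Ψ x₀ τ (τ + h)) (τ + h) := by
  obtain ⟨hΨ0, hΨd, hΨu⟩ := hΨ
  constructor
  · rintro ⟨-, c, hcq, x, ⟨hxc, hx0, hxd⟩, τ', hττ', ⟨⟨h1, h2⟩, -⟩, hφ2, hφ1⟩
    have hk0 : c.k = 0 := Nat.le_zero.mp c.hk
    have hmode : IsModeTraj f q x₀ τ x := by
      refine ⟨hxc, hx0, fun s hs => ?_⟩
      have := hxd 0 (by omega) s (by rw [c.ht0]; exact hs) (by omega)
      rwa [hcq] at this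
    have heq := hΨu x₀ τ x hmode
    refine ⟨τ' - τ, by linarith, ⟨by linarith, by linarith⟩, ?_, ?_⟩
    · have : τ + (τ' - τ) = τ' := by ring
      rw [this, ← heq (by exact hττ')]
      exact hφ2
    · intro h ⟨hh0, hh1⟩
      have hmem : τ + h ∈ Set.Ici τ := by simp; linarith
      rw [← heq hmem]
      exact hφ1 _ ⟨by linarith, by linarith⟩
  · rintro ⟨δ, hδ, hI, hφ2, hφ1⟩
    refine ⟨hτ, ⟨0, le_refl 0, fun _ => q, fun _ => τ, rfl, fun j hj => absurd hj (by omega)⟩,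
      rfl, Ψ x₀ τ, ⟨?_, hΨ0 x₀ τ, fun j _ s _ _ => (hΨd x₀ τ s).hasDerivWithinAt⟩,
      τ + δ, by linarith, ⟨⟨by linarith [hI.1], by linarith [hI.2]⟩, by simpa⟩, by simpa, ?_⟩
    · exact fun t _ => (hΨd x₀ τ t).continuousAt.continuousWithinAt
    · intro τ'' ⟨h1, h2⟩
      have : τ'' = τ + (τ'' - τ) := by ring
      rw [this]
      exact hφ1 _ ⟨by linarith, by linarith⟩
end
end

section
/- Assume Q has at least two elements and every mode q : Q has a global flow Ψ_q. Then for every q : Q, every i ≥ 1, every x₀ : E, and every τ ≥ 0: (x₀, τ) ∈ X q i if and only if there exist a mode q' : Q with q' ≠ q and δ ≥ 0 such that (Ψ_q x₀ τ (τ + δ), τ + δ) ∈ X q' (i-1) and φ₁ (Ψ_q x₀ τ (τ + h)) (τ + h) for all h ∈ Set.Icc 0 δ. (Paper's Theorem 2, inductive equation (4), expressing X_q^i via the solution map.) -/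
open Set

noncomputable section

-- ## Helpers

lemma flow_cont {n : ℕ} {Q : Type} {f : Q → E n → E n} {q : Q} {Ψq : E n → ℝ → ℝ → E n}
    (hΨ : IsGlobalFlow f q Ψq) (x₀ : E n) (τ : ℝ) : Continuous (Ψq x₀ τ) := by
  rw [continuous_iff_continuousAt]
  exact fun t => (hΨ.2.1 x₀ τ t).continuousAt

/-- Trivial membership in `X q' j` at a time `τ*` in `[l,u]` where `φ₂` holds. -/
lemma mem_X_of_here {n : ℕ} {Q : Type} {φ₁ φ₂ : E n → ℝ → Prop} {l u : ℝ}
    {f : Q → E n → E n} {Ψ : Q → E n → ℝ → ℝ → E n}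
    (hΨ : ∀ q : Q, IsGlobalFlow f q (Ψ q)) (q' : Q) (j : ℕ) {p : E n} {τs : ℝ}
    (h0 : 0 ≤ τs) (hls : l ≤ τs) (hsu : τs ≤ u) (h2 : φ₂ p τs) (h1 : φ₁ p τs) :
    (p, τs) ∈ X φ₁ φ₂ l u f q' j := by
  refine ⟨h0, ⟨0, Nat.zero_le _, fun _ => q', fun _ => τs, rfl,
    fun j hj => absurd hj (Nat.not_lt_zero j)⟩, rfl, Ψ q' p τs, ?_, ?_⟩
  · refine ⟨((flow_cont (hΨ q') p τs).continuousOn), (hΨ q').1 p τs, ?_⟩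
    intro j hj s hs _
    exact ((hΨ q').2.1 p τs s).hasDerivWithinAt
  · exact ⟨τs, le_refl _, ⟨⟨by linarith, by linarith⟩, by simp⟩,
      by rw [(hΨ q').1]; exact h2,
      fun τ'' hτ'' => by
        have : τ'' = τs := le_antisymm hτ''.2 hτ''.1
        subst this; rw [(hΨ q').1]; exact h1⟩

/-- A function following mode `q` on `[τ, σ)` agrees with the flow on `[τ, σ]`. -/
lemma prefix_flow {n : ℕ} {Q : Type} {f : Q → E n → E n} {q : Q} {Ψq : E n → ℝ → ℝ → E n}
    (hΨ : IsGlobalFlow f q Ψq) {τ σ : ℝ} (hτσ : τ ≤ σ) {x : ℝ → E n}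
    (hc : ContinuousOn x (Set.Ici τ))
    (hd : ∀ s, τ ≤ s → s < σ → HasDerivWithinAt x (f q (x s)) (Set.Ici s) s) :
    ∀ s ∈ Set.Icc τ σ, Ψq (x τ) τ s = x s := by
  set y : ℝ → E n := fun s => if s < σ then x s else Ψq (x σ) σ s with hy
  have hyx : ∀ s, s ≤ σ → y s = x s := by
    intro s hs
    rcases lt_or_eq_of_le hs with h | h
    · simp [hy, h]
    · subst h; simp [hy, hΨ.1]
  have hyΨ : ∀ s, σ ≤ s → y s = Ψq (x σ) σ s := by
    intro s hs
    rcases eq_or_lt_of_le hs with h | h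
    · subst h; simp [hy, hΨ.1]
    · simp [hy, not_lt_of_gt h]
  have hmode : IsModeTraj f q (x τ) τ y := by
    refine ⟨?_, hyx τ hτσ, ?_⟩
    · intro s hs
      apply ContinuousWithinAt.mono (t := (Set.Ici τ ∩ Set.Iic σ) ∪ Set.Ici σ)
      · apply ContinuousWithinAt.union
        · rcases le_or_gt s σ with h | h
          · exact (((hc s hs).mono inter_subset_left).congr
              (fun z hz => hyx z hz.2) (hyx s h))
          · apply continuousWithinAt_of_notMem_closure
            intro hmem
            have : s ∈ Set.Iic σ := closure_minimal (inter_subset_right) isClosed_Iic hmem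
            exact absurd this (not_le_of_gt h)
        · rcases le_or_gt σ s with h | h
          · exact (((flow_cont hΨ (x σ) σ).continuousWithinAt).congr
              (fun z hz => hyΨ z hz) (hyΨ s h))
          · apply continuousWithinAt_of_notMem_closure
            rw [closure_Ici]
            exact not_le_of_gt h
      · intro z hz
        rcases le_or_gt z σ with h | h
        · exact Or.inl ⟨hz, h⟩
        · exact Or.inr h.le
    · intro s hs
      rcases lt_or_ge s σ with h | h
      · have hne : y s = x s := hyx s h.le
        rw [hne]
        apply (hd s hs h).congr_of_eventuallyEq
        · have : ∀ᶠ z in nhds s, z ∈ Set.Iio σ := isOpen_Iio.eventually_mem h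
          exact ((this.mono (fun z hz => hyx z (le_of_lt hz))).filter_mono
            nhdsWithin_le_nhds)
        · exact hne
      · have hne : y s = Ψq (x σ) σ s := hyΨ s h
        rw [hne]
        exact (((hΨ.2.1 (x σ) σ s).hasDerivWithinAt)).congr
          (fun z hz => hyΨ z (le_trans h hz)) hne
  intro s hs
  have := hΨ.2.2 (x τ) τ y hmode hs.1
  rw [← this, hyx s hs.2]

lemma Controller.t_zero_le {Q : Type} {τ : ℝ} {i : ℕ} (c : Controller Q τ i) :
    ∀ b, b ≤ c.k → c.t 0 ≤ c.t b := by
  intro b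
  induction b with
  | zero => intro _; exact le_refl _
  | succ b ih => intro hb; exact le_trans (ih (by omega)) (c.mono b (by omega))

/-- End case of the forward direction: the trajectory follows mode `q`
until the witness time `τs`. -/
lemma fwd_end {n : ℕ} {Q : Type} [Nontrivial Q] {φ₁ φ₂ : E n → ℝ → Prop} {l u : ℝ}
    (hl : 0 ≤ l) {f : Q → E n → E n} {Ψ : Q → E n → ℝ → ℝ → E n}
    (hΨ : ∀ q : Q, IsGlobalFlow f q (Ψ q)) (q : Q) (i : ℕ) {x₀ : E n} {τ : ℝ}
    {x : ℝ → E n} (hc : ContinuousOn x (Set.Ici τ)) (hx0 : x τ = x₀)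
    {τs : ℝ} (hττs : τ ≤ τs) (hls : l ≤ τs) (hsu : τs ≤ u)
    (hφ₂ : φ₂ (x τs) τs) (hφ₁ : ∀ τ'' ∈ Set.Icc τ τs, φ₁ (x τ'') τ'')
    (hd : ∀ s, τ ≤ s → s < τs → HasDerivWithinAt x (f q (x s)) (Set.Ici s) s) :
    ∃ q' : Q, q' ≠ q ∧ ∃ δ ≥ (0 : ℝ),
      (Ψ q x₀ τ (τ + δ), τ + δ) ∈ X φ₁ φ₂ l u f q' (i - 1) ∧
      ∀ h ∈ Set.Icc (0 : ℝ) δ, φ₁ (Ψ q x₀ τ (τ + h)) (τ + h) := by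
  obtain ⟨q', hq'⟩ := exists_ne q
  have hflow := prefix_flow (hΨ q) hττs hc hd
  rw [hx0] at hflow
  refine ⟨q', hq', τs - τ, by linarith, ?_, ?_⟩
  · rw [show τ + (τs - τ) = τs by ring, hflow τs ⟨hττs, le_refl _⟩]
    exact mem_X_of_here hΨ q' (i - 1) (le_trans hl hls) hls hsu hφ₂
      (hφ₁ τs ⟨hττs, le_refl _⟩)
  · intro h hh
    have hmem : τ + h ∈ Set.Icc τ τs := ⟨by linarith [hh.1], by linarith [hh.2]⟩
    rw [hflow (τ + h) hmem]
    exact hφ₁ (τ + h) hmem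

/-- Forward direction, by induction on the number of controller entries. -/
lemma fwd {n : ℕ} {Q : Type} [Nontrivial Q] {φ₁ φ₂ : E n → ℝ → Prop} {l u : ℝ}
    (hl : 0 ≤ l) {f : Q → E n → E n} {Ψ : Q → E n → ℝ → ℝ → E n}
    (hΨ : ∀ q : Q, IsGlobalFlow f q (Ψ q)) (q : Q) (i : ℕ) {x₀ : E n} {τ : ℝ}
    (hτ0 : 0 ≤ τ) :
    ∀ K (c : Controller Q τ i), c.k = K → c.q 0 = q →
    ∀ x, IsTraj f c x₀ x → Sat φ₁ φ₂ l u x τ →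
    ∃ q' : Q, q' ≠ q ∧ ∃ δ ≥ (0 : ℝ),
      (Ψ q x₀ τ (τ + δ), τ + δ) ∈ X φ₁ φ₂ l u f q' (i - 1) ∧
      ∀ h ∈ Set.Icc (0 : ℝ) δ, φ₁ (Ψ q x₀ τ (τ + h)) (τ + h) := by
  intro K
  induction K with
  | zero =>
      intro c hk hcq x hxt hsat
      obtain ⟨τs, hττs, ⟨⟨hls', hus'⟩, _⟩, hφ₂, hφ₁⟩ := hsat
      refine fwd_end hl hΨ q i hxt.1 hxt.2.1 hττs (by linarith) (by linarith) hφ₂ hφ₁ ?_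
      intro s hs _
      have := hxt.2.2 0 (by omega) s (by rw [c.ht0]; exact hs) (fun h => absurd h (by omega))
      rwa [hcq] at this
  | succ K ih =>
      intro c hk hcq x hxt hsat
      obtain ⟨τs, hττs, ⟨⟨hls', hus'⟩, _⟩, hφ₂, hφ₁⟩ := hsat
      have hls : l ≤ τs := by linarith
      have hsu : τs ≤ u := by linarith
      have ht01 : τ ≤ c.t 1 := by have := c.mono 0 (by omega); rwa [c.ht0] at this
      rcases le_or_gt τs (c.t 1) with hA | hB
      · refine fwd_end hl hΨ q i hxt.1 hxt.2.1 hττs hls hsu hφ₂ hφ₁ ?_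
        intro s hs hlt
        have := hxt.2.2 0 (by omega) s (by rw [c.ht0]; exact hs)
          (fun _ => lt_of_lt_of_le hlt hA)
        rwa [hcq] at this
      · by_cases hq1 : c.q 1 = q
        · -- delete the (redundant) second entry and recurse
          refine ih ⟨K, by have := c.hk; omega,
            fun j => match j with | 0 => c.q 0 | m + 1 => c.q (m + 2),
            fun j => match j with | 0 => c.t 0 | m + 1 => c.t (m + 2),
            c.ht0, ?_⟩ rfl hcq x ⟨hxt.1, hxt.2.1, ?_⟩
            ⟨τs, hττs, ⟨⟨hls', hus'⟩, by simp; linarith⟩, hφ₂, hφ₁⟩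
          · intro j hj
            cases j with
            | zero =>
                show c.t 0 ≤ c.t 2
                exact le_trans (c.mono 0 (by omega)) (c.mono 1 (by have hj' : 0 < K := hj; omega))
            | succ m =>
                show c.t (m + 2) ≤ c.t (m + 3)
                exact c.mono (m + 2) (by have hj' : m + 1 < K := hj; omega)
          · intro j hj s hs hs2
            cases j with
            | zero =>
                show HasDerivWithinAt x (f (c.q 0) (x s)) (Set.Ici s) s
                rcases lt_or_ge s (c.t 1) with h | h
                · exact hxt.2.2 0 (by omega) s hs (fun _ => h)
                · have := hxt.2.2 1 (by omega) s h (fun h1 => hs2 (show 0 < K by omega))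
                  rw [hcq, ← hq1]
                  exact this
            | succ m =>
                exact hxt.2.2 (m + 2) (by have hj' : m + 1 ≤ K := hj; omega) s hs (fun h => hs2 (show m + 1 < K by omega))
        · -- switch to the tail controller from time `c.t 1`
          have hflow := prefix_flow (hΨ q) ht01 hxt.1 ?_
          swap
          · intro s hs hlt
            have := hxt.2.2 0 (by omega) s (by rw [c.ht0]; exact hs) (fun _ => hlt)
            rwa [hcq] at this
          rw [hxt.2.1] at hflow
          refine ⟨c.q 1, hq1, c.t 1 - τ, by linarith, ?_, ?_⟩
          · rw [show τ + (c.t 1 - τ) = c.t 1 by ring,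
              hflow (c.t 1) ⟨ht01, le_refl _⟩]
            refine ⟨by linarith, ⟨K, by have := c.hk; omega, fun j => c.q (j + 1),
              fun j => c.t (j + 1), rfl, fun j hj => c.mono (j + 1) (by have hj' : j < K := hj; omega)⟩,
              rfl, x, ⟨hxt.1.mono (Set.Ici_subset_Ici.mpr ht01), rfl, ?_⟩, ?_⟩
            · intro j hj s hs hs2
              exact hxt.2.2 (j + 1) (by have hj' : j ≤ K := hj; omega) s hs (fun h => hs2 (show j < K by omega))
            · exact ⟨τs, hB.le, ⟨⟨by linarith, by linarith⟩, by simp; linarith⟩,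
                hφ₂, fun τ'' h'' => hφ₁ τ'' ⟨le_trans ht01 h''.1, h''.2⟩⟩
          · intro h hh
            have hmem : τ + h ∈ Set.Icc τ (c.t 1) :=
              ⟨by linarith [hh.1], by linarith [hh.2]⟩
            rw [hflow (τ + h) hmem]
            exact hφ₁ (τ + h) ⟨hmem.1, le_trans hmem.2 hB.le⟩


/-- Backward direction. -/
lemma bwd {n : ℕ} {Q : Type} {φ₁ φ₂ : E n → ℝ → Prop} {l u : ℝ}
    {f : Q → E n → E n} {Ψ : Q → E n → ℝ → ℝ → E n}
    (hΨ : ∀ q : Q, IsGlobalFlow f q (Ψ q)) (q : Q) (i : ℕ) (hi : 1 ≤ i)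
    {x₀ : E n} {τ : ℝ} (hτ0 : 0 ≤ τ) (q' : Q) (δ : ℝ) (hδ : 0 ≤ δ)
    (hmem : (Ψ q x₀ τ (τ + δ), τ + δ) ∈ X φ₁ φ₂ l u f q' (i - 1))
    (hφ : ∀ h ∈ Set.Icc (0 : ℝ) δ, φ₁ (Ψ q x₀ τ (τ + h)) (τ + h)) :
    (x₀, τ) ∈ X φ₁ φ₂ l u f q i := by
  obtain ⟨h0', c', hc'q, x', hx't, hsat'⟩ := hmem
  have hτσ : τ ≤ τ + δ := by linarith
  set y : ℝ → E n := fun s => if s < τ + δ then Ψ q x₀ τ s else x' s with hy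
  have hyΨ : ∀ s, s ≤ τ + δ → y s = Ψ q x₀ τ s := by
    intro s hs
    rcases lt_or_eq_of_le hs with h | h
    · simp [hy, h]
    · subst h; simp [hy, hx't.2.1]
  have hyx' : ∀ s, τ + δ ≤ s → y s = x' s := by
    intro s hs
    simp [hy, not_lt_of_ge hs]
  refine ⟨hτ0, (Controller.prepend q τ hτσ c').relax (by omega), rfl, y, ⟨?_, ?_, ?_⟩, ?_⟩
  · -- continuity
    intro s hs
    apply ContinuousWithinAt.mono (t := (Set.Ici τ ∩ Set.Iic (τ + δ)) ∪ Set.Ici (τ + δ))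
    · apply ContinuousWithinAt.union
      · rcases le_or_gt s (τ + δ) with h | h
        · exact ((flow_cont (hΨ q) x₀ τ).continuousWithinAt).congr
            (fun z hz => hyΨ z hz.2) (hyΨ s h)
        · apply continuousWithinAt_of_notMem_closure
          intro hmem
          have : s ∈ Set.Iic (τ + δ) :=
            closure_minimal (inter_subset_right) isClosed_Iic hmem
          exact absurd this (not_le_of_gt h)
      · rcases le_or_gt (τ + δ) s with h | h
        · exact ((hx't.1 s h).congr (fun z hz => hyx' z hz) (hyx' s h))
        · apply continuousWithinAt_of_notMem_closure
          rw [closure_Ici]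
          exact not_le_of_gt h
    · intro z hz
      rcases le_or_gt z (τ + δ) with h | h
      · exact Or.inl ⟨hz, h⟩
      · exact Or.inr h.le
  · -- initial value
    rw [hyΨ τ hτσ, (hΨ q).1]
  · -- derivative conditions
    intro j hj s hs hs2
    cases j with
    | zero =>
        show HasDerivWithinAt y (f q (y s)) (Set.Ici s) s
        have hslt : s < c'.t 0 := hs2 (Nat.succ_pos _)
        rw [c'.ht0] at hslt
        rw [hyΨ s hslt.le]
        apply (((hΨ q).2.1 x₀ τ s).hasDerivWithinAt).congr_of_eventuallyEq
        · have hev : ∀ᶠ z in nhds s, z ∈ Set.Iio (τ + δ) := isOpen_Iio.eventually_mem hslt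
          exact ((hev.mono (fun z hz => hyΨ z (le_of_lt hz))).filter_mono
            nhdsWithin_le_nhds)
        · exact hyΨ s hslt.le
    | succ m =>
        show HasDerivWithinAt y (f (c'.q m) (y s)) (Set.Ici s) s
        have hm : m ≤ c'.k := Nat.le_of_succ_le_succ hj
        have hσs : τ + δ ≤ s := by
          have h1 : c'.t 0 ≤ c'.t m := c'.t_zero_le m hm
          rw [c'.ht0] at h1
          exact le_trans h1 hs
        have hd := hx't.2.2 m hm s hs (fun h => hs2 (Nat.succ_lt_succ h))
        rw [hyx' s hσs]
        exact hd.congr (fun z hz => hyx' z (le_trans hσs hz)) (hyx' s hσs)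
  · -- Sat
    obtain ⟨τs, hστs, ⟨⟨h1, h2⟩, h3⟩, hφ₂', hφ₁'⟩ := hsat'
    dsimp only at hστs h1 h2 h3 hφ₁'
    refine ⟨τs, by linarith, ⟨⟨by linarith, by linarith⟩, by simp; linarith⟩, ?_, ?_⟩
    · rw [hyx' τs hστs]; exact hφ₂'
    · intro τ'' h''
      rcases lt_or_ge τ'' (τ + δ) with h | h
      · rw [hyΨ τ'' h.le]
        have := hφ (τ'' - τ) ⟨by linarith [h''.1], by linarith⟩
        rw [show τ + (τ'' - τ) = τ'' by ring] at this
        exact this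
      · rw [hyx' τ'' h]
        exact hφ₁' τ'' ⟨h, h''.2⟩

/-- Paper's Theorem 2, inductive equation (4): `X q i` expressed via the solution map. -/
theorem stmt9 {n : ℕ} (φ₁ φ₂ : E n → ℝ → Prop) (l u : ℝ) (hl : 0 ≤ l) (hlu : l ≤ u)
    (Q : Type) [Fintype Q] [Nontrivial Q] (f : Q → E n → E n)
    (Ψ : Q → E n → ℝ → ℝ → E n) (hΨ : ∀ q : Q, IsGlobalFlow f q (Ψ q))
    (q : Q) (i : ℕ) (hi : 1 ≤ i) (x₀ : E n) (τ : ℝ) (hτ : 0 ≤ τ) :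
    (x₀, τ) ∈ X φ₁ φ₂ l u f q i ↔
      ∃ q' : Q, q' ≠ q ∧ ∃ δ ≥ (0 : ℝ),
        (Ψ q x₀ τ (τ + δ), τ + δ) ∈ X φ₁ φ₂ l u f q' (i - 1) ∧
        ∀ h ∈ Set.Icc (0 : ℝ) δ, φ₁ (Ψ q x₀ τ (τ + h)) (τ + h) := by
  constructor
  · rintro ⟨hτ0, c, hcq, x, hxt, hsat⟩
    exact fwd hl hΨ q i hτ c.k c rfl hcq x hxt hsat
  · rintro ⟨q', _, δ, hδ, hmem, hφ⟩
    exact bwd hΨ q i hi hτ q' δ hδ hmem hφ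
end
end

section
/- Constant dynamics, base case: suppose the vector fields are constant, i.e., f q = fun _ => a q for a fixed map a : Q → E. Then for every q : Q, every x₀ : E, and every τ ≥ 0: (x₀, τ) ∈ X q 0 if and only if there exists δ ≥ 0 such that τ + δ ∈ Set.Icc l u, φ₂ (x₀ + δ • a q) (τ + δ), and φ₁ (x₀ + h • a q) (τ + h) for all h ∈ Set.Icc 0 δ. (Paper's Corollary 2 specialized to equation (3), using that Ψ(t; x, τ, q) = x + (t − τ)·a_q is the unique solution of ẋ = a_q.) -/
open Set

noncomputable section

/-! A single mode has a unique trajectory, the flow line `Ψ x₀ τ`, so with no switches allowed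
membership in `X q 0` is just the specification along that flow line. For constant dynamics the flow
is `x₀ + (t - τ) • a q`, by uniqueness of solutions with equal right derivatives. -/

section

variable {n : ℕ} {Q : Type}

theorem sat_congr {φ₁ φ₂ : E n → ℝ → Prop} {l u τ : ℝ} {x y : ℝ → E n}
    (hxy : EqOn x y (Ici τ)) : Sat φ₁ φ₂ l u x τ ↔ Sat φ₁ φ₂ l u y τ := by
  unfold Sat
  refine exists_congr fun τ' => and_congr_right fun hτ' => ?_
  rw [hxy hτ']
  refine and_congr_right' (and_congr_right' (forall₂_congr fun s hs => ?_))
  rw [hxy hs.1]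

theorem sat_iff_exists_delta {φ₁ φ₂ : E n → ℝ → Prop} {l u τ : ℝ} {x : ℝ → E n} :
    Sat φ₁ φ₂ l u x τ ↔ ∃ δ ≥ (0 : ℝ), τ + δ ∈ Icc l u ∧ φ₂ (x (τ + δ)) (τ + δ) ∧
      ∀ h ∈ Icc (0 : ℝ) δ, φ₁ (x (τ + h)) (τ + h) := by
  constructor
  · rintro ⟨τ', hττ', ⟨⟨hl, hu⟩, -⟩, hφ₂, hφ₁⟩
    refine ⟨τ' - τ, sub_nonneg.2 hττ', ⟨by linarith, by linarith⟩, by simpa using hφ₂,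
      fun h hh => hφ₁ _ ⟨by linarith [hh.1], by linarith [hh.2]⟩⟩
  · rintro ⟨δ, hδ, ⟨hl, hu⟩, hφ₂, hφ₁⟩
    refine ⟨τ + δ, by linarith, ⟨⟨by linarith, by linarith⟩, by simpa using hδ⟩, hφ₂,
      fun s hs => ?_⟩
    simpa using hφ₁ (s - τ) ⟨by linarith [hs.1], by linarith [hs.2]⟩

theorem isTraj_iff_isModeTraj {f : Q → E n → E n} {τ : ℝ} (c : Controller Q τ 0)
    (x₀ : E n) (x : ℝ → E n) : IsTraj f c x₀ x ↔ IsModeTraj f (c.q 0) x₀ τ x := by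
  have hk : c.k = 0 := Nat.le_zero.mp c.hk
  refine and_congr_right' (and_congr_right' ⟨fun h s hs => ?_, fun h j hj s hs _ => ?_⟩)
  · exact h 0 (Nat.zero_le _) s (by rwa [c.ht0]) (by omega)
  · obtain rfl : j = 0 := by omega
    exact h s (by rwa [← c.ht0])

theorem IsGlobalFlow.isModeTraj {f : Q → E n → E n} {q : Q} {Ψ : E n → ℝ → ℝ → E n}
    (hΨ : IsGlobalFlow f q Ψ) (x₀ : E n) (τ : ℝ) : IsModeTraj f q x₀ τ (Ψ x₀ τ) :=
  ⟨fun t _ => (hΨ.2.1 x₀ τ t).continuousAt.continuousWithinAt, hΨ.1 x₀ τ,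
    fun t _ => (hΨ.2.1 x₀ τ t).hasDerivWithinAt⟩

theorem mem_X_zero_iff_of_isGlobalFlow {φ₁ φ₂ : E n → ℝ → Prop} {l u : ℝ}
    {f : Q → E n → E n} {q : Q} {Ψ : E n → ℝ → ℝ → E n} (hΨ : IsGlobalFlow f q Ψ)
    (x₀ : E n) (τ : ℝ) :
    (x₀, τ) ∈ X φ₁ φ₂ l u f q 0 ↔ 0 ≤ τ ∧ Sat φ₁ φ₂ l u (Ψ x₀ τ) τ := by
  refine and_congr_right fun _ => ⟨?_, fun hsat => ?_⟩
  · rintro ⟨c, rfl, x, hx, hsat⟩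
    exact (sat_congr (hΨ.2.2 x₀ τ x ((isTraj_iff_isModeTraj c x₀ x).1 hx))).1 hsat
  · exact ⟨⟨0, le_rfl, fun _ => q, fun _ => τ, rfl, by omega⟩, rfl, Ψ x₀ τ,
      (isTraj_iff_isModeTraj _ x₀ _).2 (hΨ.isModeTraj x₀ τ), hsat⟩

theorem hasDerivAt_add_sub_smul (x₀ v : E n) (τ t : ℝ) :
    HasDerivAt (fun s : ℝ => x₀ + (s - τ) • v) v t := by
  simpa using (((hasDerivAt_id t).sub_const τ).smul_const v).const_add x₀

theorem isGlobalFlow_const (a : Q → E n) (q : Q) :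
    IsGlobalFlow (fun q _ => a q) q (fun x₀ τ t => x₀ + (t - τ) • a q) := by
  refine ⟨fun x₀ τ => by simp, fun x₀ τ t => hasDerivAt_add_sub_smul x₀ (a q) τ t, ?_⟩
  rintro x₀ τ x ⟨hcont, rfl, hderiv⟩ t (ht : τ ≤ t)
  exact eq_of_has_deriv_right_eq (fun s hs => hderiv s hs.1)
    (fun s _ => (hasDerivAt_add_sub_smul (x τ) (a q) τ s).hasDerivWithinAt)
    (hcont.mono Icc_subset_Ici_self)
    (fun s _ => (hasDerivAt_add_sub_smul (x τ) (a q) τ s).continuousAt.continuousWithinAt)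
    (by simp) t ⟨ht, le_rfl⟩

end

theorem stmt10_general {n : ℕ} (φ₁ φ₂ : E n → ℝ → Prop) (l u : ℝ)
    (Q : Type) (a : Q → E n)
    (q : Q) (x₀ : E n) (τ : ℝ) (hτ : 0 ≤ τ) :
    (x₀, τ) ∈ X φ₁ φ₂ l u (fun q _ => a q) q 0 ↔
      ∃ δ ≥ (0 : ℝ), (τ + δ) ∈ Set.Icc l u ∧ φ₂ (x₀ + δ • a q) (τ + δ) ∧
        ∀ h ∈ Set.Icc (0 : ℝ) δ, φ₁ (x₀ + h • a q) (τ + h) := by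
  rw [mem_X_zero_iff_of_isGlobalFlow (isGlobalFlow_const a q), sat_iff_exists_delta]
  simp only [add_sub_cancel_left, true_and, hτ]

/-- Paper's Corollary 2, base case: `X q 0` for constant dynamics `f q = fun _ => a q`. -/
theorem stmt10 {n : ℕ} (φ₁ φ₂ : E n → ℝ → Prop) (l u : ℝ) (hl : 0 ≤ l) (hlu : l ≤ u)
    (Q : Type) [Fintype Q] (a : Q → E n)
    (q : Q) (x₀ : E n) (τ : ℝ) (hτ : 0 ≤ τ) :
    (x₀, τ) ∈ X φ₁ φ₂ l u (fun q _ => a q) q 0 ↔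
      ∃ δ ≥ (0 : ℝ), (τ + δ) ∈ Set.Icc l u ∧ φ₂ (x₀ + δ • a q) (τ + δ) ∧
        ∀ h ∈ Set.Icc (0 : ℝ) δ, φ₁ (x₀ + h • a q) (τ + h) :=
  stmt10_general φ₁ φ₂ l u Q a q x₀ τ hτ
end
end

section
/- Inner-approximation of the reach-avoid set by certificate functions (paper's Theorem 3, with the initial-set inequality made strict and the topological hypotheses made explicit): let f : E → E, let ψ₁ ψ₂ : Set E with ψ₁ open and bounded and ψ₂ open, and let v w : E → ℝ be continuously differentiable (ContDiff ℝ 1). Assume (i) ⟪gradient v y, f y⟫ ≥ 0 for all y ∈ closure (ψ₁ \ ψ₂); (ii) v y ≤ ⟪gradient w y, f y⟫ for all y ∈ closure (ψ₁ \ ψ₂); (iii) v y ≤ 0 for all y ∈ frontier ψ₁. Then every function x : ℝ → E satisfying HasDerivAt x (f (x t)) t for all t ≥ 0, x 0 ∈ ψ₁, and v (x 0) > 0 satisfies the reach-avoid property: there exists T ≥ 0 with x T ∈ ψ₂ and x t ∈ ψ₁ for all t ∈ Set.Icc 0 T. -/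
open Set

noncomputable section

/-!
Along the trajectory, `v ∘ x` is nondecreasing while `x` stays in `closure (ψ₁ \ ψ₂)`, and then
`w ∘ x` grows at rate at least `v (x 0) > 0`. Since `w` is bounded on the compact set
`closure ψ₁`, the trajectory cannot stay in `ψ₁ \ ψ₂` forever. If it left `ψ₁` before entering
`ψ₂`, then at the first exit time `σ` it would lie on `frontier ψ₁`, where `v ≤ 0`, although
`v (x σ) ≥ v (x 0) > 0`.
-/

open RealInnerProductSpace

theorem exists_first_exit_time {X : Type*} [TopologicalSpace X] {x : ℝ → X} {U : Set X}
    (hx : ContinuousOn x (Ici 0)) (hU : IsOpen U) (hexit : ∃ t ≥ 0, x t ∉ U) :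
    ∃ σ ≥ 0, x σ ∉ U ∧ ∀ t ∈ Ico 0 σ, x t ∈ U := by
  set S := Ici 0 ∩ x ⁻¹' Uᶜ
  have hS : IsClosed S := hx.preimage_isClosed_of_isClosed isClosed_Ici hU.isClosed_compl
  obtain ⟨t, ht, hxt⟩ := hexit
  have hmem : sInf S ∈ S := hS.csInf_mem ⟨t, ht, hxt⟩ ⟨0, fun s hs => hs.1⟩
  refine ⟨sInf S, hmem.1, hmem.2, fun s hs => ?_⟩
  by_contra hxs
  exact (csInf_le (s := S) ⟨0, fun r hr => hr.1⟩ ⟨hs.1, hxs⟩).not_gt hs.2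

section Certificate

variable {F : Type*} [NormedAddCommGroup F] [InnerProductSpace ℝ F] [CompleteSpace F]
  {x x' : ℝ → F} {f : F → F} {S : Set F} {g v w : F → ℝ}

theorem HasDerivAt.comp_inner_gradient {t : ℝ} {y : F} (hg : DifferentiableAt ℝ g (x t))
    (hx : HasDerivAt x y t) : HasDerivAt (fun s => g (x s)) ⟪gradient g (x t), y⟫ t := by
  have h := hg.hasFDerivAt.comp_hasDerivAt t hx
  rwa [← InnerProductSpace.toDual_symm_apply] at h

theorem mul_sub_le_sub_of_le_inner_gradient (hg : Differentiable ℝ g) {a b C : ℝ}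
    (hab : a ≤ b) (hx : ∀ t ∈ Icc a b, HasDerivAt x (x' t) t)
    (hC : ∀ t ∈ Icc a b, C ≤ ⟪gradient g (x t), x' t⟫) :
    C * (b - a) ≤ g (x b) - g (x a) := by
  have hd : ∀ t ∈ Icc a b, HasDerivAt (fun s => g (x s)) ⟪gradient g (x t), x' t⟫ t :=
    fun t ht => (hx t ht).comp_inner_gradient (hg _)
  refine (convex_Icc a b).mul_sub_le_image_sub_of_le_deriv
    (fun t ht => (hd t ht).continuousAt.continuousWithinAt)
    (fun t ht => (hd t (interior_subset ht)).differentiableAt.differentiableWithinAt)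
    (fun t ht => ?_) a (left_mem_Icc.2 hab) b (right_mem_Icc.2 hab) hab
  rw [(hd t (interior_subset ht)).deriv]
  exact hC t (interior_subset ht)

theorem le_of_inner_gradient_nonneg (hv : Differentiable ℝ v)
    (hgrow : ∀ y ∈ S, 0 ≤ ⟪gradient v y, f y⟫) (hx : ∀ t ≥ 0, HasDerivAt x (f (x t)) t)
    {T : ℝ} (hT : 0 ≤ T) (hS : MapsTo x (Icc 0 T) S) : v (x 0) ≤ v (x T) := by
  have := mul_sub_le_sub_of_le_inner_gradient hv hT (fun t ht => hx t ht.1)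
    (fun t ht => hgrow _ (hS ht))
  linarith

theorem exists_notMem_of_certificate (hv : Differentiable ℝ v) (hw : Differentiable ℝ w)
    (hgrow : ∀ y ∈ S, 0 ≤ ⟪gradient v y, f y⟫) (hbound : ∀ y ∈ S, v y ≤ ⟪gradient w y, f y⟫)
    (hS : BddAbove (w '' S)) (hx : ∀ t ≥ 0, HasDerivAt x (f (x t)) t) (hv0 : 0 < v (x 0)) :
    ∃ t ≥ 0, x t ∉ S := by
  by_contra! hstay
  obtain ⟨M, hM⟩ := hS
  set T := (M - w (x 0)) / v (x 0) + 1
  have hT : 0 ≤ T := by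
    have := hM (mem_image_of_mem w (hstay 0 le_rfl))
    unfold T; positivity
  have hgrowth := mul_sub_le_sub_of_le_inner_gradient hw hT (fun t ht => hx t ht.1)
    fun t ht => (le_of_inner_gradient_nonneg hv hgrow hx ht.1 fun s hs => hstay s hs.1).trans
      (hbound _ (hstay t ht.1))
  have hwT := hM (mem_image_of_mem w (hstay T hT))
  have : v (x 0) * T = M - w (x 0) + v (x 0) := by unfold T; field_simp
  linarith

end Certificate

open RealInnerProductSpace in
theorem stmt12_general {n : ℕ} (f : E n → E n) (ψ₁ ψ₂ : Set (E n))
    (h₁open : IsOpen ψ₁) (h₁bdd : Bornology.IsBounded ψ₁)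
    (v w : E n → ℝ) (hv : ContDiff ℝ 1 v) (hw : ContDiff ℝ 1 w)
    (hgrow : ∀ y ∈ closure (ψ₁ \ ψ₂), 0 ≤ ⟪gradient v y, f y⟫)
    (hbound : ∀ y ∈ closure (ψ₁ \ ψ₂), v y ≤ ⟪gradient w y, f y⟫)
    (hbdry : ∀ y ∈ frontier ψ₁, v y ≤ 0)
    (x : ℝ → E n) (hx : ∀ t ≥ (0 : ℝ), HasDerivAt x (f (x t)) t)
    (hx0 : x 0 ∈ ψ₁) (hv0 : 0 < v (x 0)) :
    ∃ T ≥ (0 : ℝ), x T ∈ ψ₂ ∧ ∀ t ∈ Set.Icc (0 : ℝ) T, x t ∈ ψ₁ := by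
  have hv' := hv.differentiable one_ne_zero
  have hxc : ContinuousOn x (Ici 0) := fun t ht => (hx t ht).continuousAt.continuousWithinAt
  by_contra! hnot
  have hexit : ∃ t ≥ 0, x t ∉ ψ₁ := by
    have hbdd : BddAbove (w '' (ψ₁ \ ψ₂)) :=
      ((h₁bdd.subset sdiff_subset).isCompact_closure.bddAbove_image
        hw.continuous.continuousOn).mono (image_mono subset_closure)
    obtain ⟨t, ht, hxt⟩ := exists_notMem_of_certificate hv' (hw.differentiable one_ne_zero)
      (fun y hy => hgrow y (subset_closure hy)) (fun y hy => hbound y (subset_closure hy))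
      hbdd hx hv0
    by_cases h₁ : x t ∈ ψ₁
    · obtain ⟨s, hs, hxs⟩ := hnot t ht (not_not.1 fun h₂ => hxt ⟨h₁, h₂⟩)
      exact ⟨s, hs.1, hxs⟩
    · exact ⟨t, ht, h₁⟩
  obtain ⟨σ, hσ0, hσ, hbefore⟩ := exists_first_exit_time hxc h₁open hexit
  have hσpos : 0 < σ := hσ0.lt_of_ne (by rintro rfl; exact hσ hx0)
  have havoid : MapsTo x (Ico 0 σ) (ψ₁ \ ψ₂) := fun t ht =>
    ⟨hbefore t ht, fun h₂ => by
      obtain ⟨s, hs, hxs⟩ := hnot t ht.1 h₂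
      exact hxs (hbefore s ⟨hs.1, hs.2.trans_lt ht.2⟩)⟩
  have hclosure : MapsTo x (Icc 0 σ) (closure (ψ₁ \ ψ₂)) := by
    rw [← closure_Ico hσpos.ne]
    exact havoid.closure_of_continuousOn (hxc.mono (closure_Ico hσpos.ne ▸ Icc_subset_Ici_self))
  have hfront : x σ ∈ frontier ψ₁ := by
    rw [h₁open.frontier_eq]
    exact ⟨closure_mono sdiff_subset (hclosure (right_mem_Icc.2 hσ0)), hσ⟩
  linarith [hbdry _ hfront, le_of_inner_gradient_nonneg hv' hgrow hx hσ0 hclosure]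

open RealInnerProductSpace in
/-- Paper's Theorem 3: inner-approximation of the reach-avoid set by certificate
functions `v`, `w`. -/
theorem stmt12 {n : ℕ} (f : E n → E n) (ψ₁ ψ₂ : Set (E n))
    (h₁open : IsOpen ψ₁) (h₁bdd : Bornology.IsBounded ψ₁) (h₂open : IsOpen ψ₂)
    (v w : E n → ℝ) (hv : ContDiff ℝ 1 v) (hw : ContDiff ℝ 1 w)
    (hgrow : ∀ y ∈ closure (ψ₁ \ ψ₂), 0 ≤ ⟪gradient v y, f y⟫)
    (hbound : ∀ y ∈ closure (ψ₁ \ ψ₂), v y ≤ ⟪gradient w y, f y⟫)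
    (hbdry : ∀ y ∈ frontier ψ₁, v y ≤ 0)
    (x : ℝ → E n) (hx : ∀ t ≥ (0 : ℝ), HasDerivAt x (f (x t)) t)
    (hx0 : x 0 ∈ ψ₁) (hv0 : 0 < v (x 0)) :
    ∃ T ≥ (0 : ℝ), x T ∈ ψ₂ ∧ ∀ t ∈ Set.Icc (0 : ℝ) T, x t ∈ ψ₁ :=
  stmt12_general f ψ₁ ψ₂ h₁open h₁bdd v w hv hw hgrow hbound hbdry x hx hx0 hv0
end
end
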